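/- arXiv:1101.5829 — 3 statements merged into one kernel-verified Lean document; each statement's English description precedes it below -/
import Mathlib

section
/- Let D be a division algebra over a field k, σ a k-algebra automorphism of D, δ a σ-derivation of D over k, and set ψ = (σ − 1) + δ and E = {u ∈ D : ψ(u) = 0}. Let b ∈ D. If (1) b ∉ σ(E), and (2) for all u ∈ D, ψ(u) ∈ σ(E) + σ(E)b implies u ∈ E, then the k-subalgebra of the quotient division ring D(x;σ,δ) generated by b(1−x)^{−1} and (1−x)^{−1} is free on those two generators. -/
open scoped BigOperators

/-- A `k`-algebra `R` satisfies a polynomial identity (with coefficients in `k`). -/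
def SatisfiesPI (k : Type*) [CommRing k] (R : Type*) [Ring R] [Algebra k R] : Prop :=
  ∃ (n : ℕ) (p : FreeAlgebra k (Fin n)), p ≠ 0 ∧
    ∀ f : Fin n → R, (FreeAlgebra.lift k f) p = 0

/-- `R` is locally PI over `k`: every finitely generated `k`-subalgebra satisfies a PI. -/
def LocallyPI (k : Type*) [CommRing k] (R : Type*) [Ring R] [Algebra k R] : Prop :=
  ∀ S : Subalgebra k R, S.FG → SatisfiesPI k S

/-- `R` contains a free `k`-subalgebra on two generators. -/
def ContainsFreeSubalgebra (k : Type*) [CommRing k] (R : Type*) [Ring R] [Algebra k R] :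
    Prop :=
  ∃ f : FreeAlgebra k (Fin 2) →ₐ[k] R, Function.Injective f

/-- `Q`, together with the embedding `i : A →ₐ[k] Q` and the element `x : Q`, is the quotient
division ring of the Ore extension `A[x; σ, δ]`: the relation `x a = σ(a) x + δ(a)` holds, the
powers of `x` are left linearly independent over `A`, and every element of `Q` is a right
fraction of two elements of the subalgebra generated by `A` and `x`. -/
structure IsOreQuotient (k : Type*) [CommRing k]
    (A : Type*) [Ring A] [Algebra k A]
    (σ : A →ₐ[k] A) (δ : A →ₗ[k] A)
    (Q : Type*) [DivisionRing Q] [Algebra k Q]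
    (i : A →ₐ[k] Q) (x : Q) : Prop where
  inj : Function.Injective i
  rel : ∀ a : A, x * i a = i (σ a) * x + i (δ a)
  indep : ∀ (n : ℕ) (c : ℕ → A),
    ∑ j ∈ Finset.range n, i (c j) * x ^ j = 0 → ∀ j < n, c j = 0
  den : ∀ q : Q, ∃ p r : Q, p ∈ Algebra.adjoin k (Set.range ⇑i ∪ {x}) ∧
    r ∈ Algebra.adjoin k (Set.range ⇑i ∪ {x}) ∧ r ≠ 0 ∧ q = p * r⁻¹

/-!
Write `y = (1 - x)⁻¹`, so that the generators are `b y` and `y`, and consider more generally left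
`D`-combinations `∑ c_w y w` of words `w` in them; call `c` a relation if this sum is a left
polynomial in `x`. Since `(1 - x) a = σ(a) (1 - x) - ψ(a)`, multiplying by `1 - x` on the left
turns a relation `c` into a relation whose coefficient at a word `w` is
`σ(c_{0w}) b + σ(c_{1w}) - ψ(c_w)`. On words of maximal length this is `-ψ(c_w)`, so a
minimal-support argument yields a relation whose top coefficients all lie in `E`; the new relation
is then shorter, hence zero by induction, and conditions (2) and (1) force the top coefficients
to vanish. In the base case, `a y` is a left polynomial only for `a = 0`: compare leading
coefficients in `(1 - x) p = 1`.
-/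

theorem FreeAlgebra.injective_lift_of_linearIndependent {R X A : Type*} [CommSemiring R]
    [Semiring A] [Algebra R A] {f : X → A}
    (hf : LinearIndependent R fun l : List X => (l.map f).prod) :
    Function.Injective (FreeAlgebra.lift R f) := by
  have hbasis (l : FreeMonoid X) :
      (FreeAlgebra.lift R f).toLinearMap (basisFreeMonoid R X l) = (l.toList.map f).prod := by
    have : basisFreeMonoid R X l = FreeMonoid.lift (ι R) l := by
      simp [basisFreeMonoid, equivMonoidAlgebraFreeMonoid]
    rw [this, ← FreeMonoid.lift_apply]
    clear this
    induction l using FreeMonoid.inductionOn' with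
    | one => simp
    | of_mul x l ih => rw [AlgHom.toLinearMap_apply] at ih; simp [ih]
  have := (basisFreeMonoid R X).injective_constr_of_linearIndependent (R₂ := R)
    (hf.comp _ FreeMonoid.toList.injective)
  rwa [Function.comp_def, ← funext hbasis, Module.Basis.constr_self] at this

namespace OreQuotient

open Finsupp

variable {D Q : Type*} [DivisionRing D] [DivisionRing Q]

section CommRing

variable {k : Type*} [CommRing k] [Algebra k D] [Algebra k Q]

section Psi

variable (σ : D →ₐ[k] D) (δ : D →ₗ[k] D)

def psi : D →ₗ[k] D := σ.toLinearMap - LinearMap.id + δ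

@[simp]
theorem psi_apply (u : D) : psi σ δ u = σ u - u + δ u := rfl

variable {σ δ}

theorem psi_one (hδ : ∀ a b : D, δ (a * b) = σ a * δ b + δ a * b) : psi σ δ 1 = 0 := by
  simpa using hδ 1 1

theorem psi_algebraMap (hδ : ∀ a b : D, δ (a * b) = σ a * δ b + δ a * b) (a : k) :
    psi σ δ (algebraMap k D a) = 0 := by
  rw [Algebra.algebraMap_eq_smul_one, map_smul, psi_one hδ, smul_zero]

theorem psi_mul (hδ : ∀ a b : D, δ (a * b) = σ a * δ b + δ a * b) (u v : D) :
    psi σ δ (u * v) = σ u * psi σ δ v + psi σ δ u * v := by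
  simp only [psi_apply, map_mul, hδ]
  noncomm_ring

theorem psi_inv (hδ : ∀ a b : D, δ (a * b) = σ a * δ b + δ a * b) {u : D}
    (hu : psi σ δ u = 0) : psi σ δ u⁻¹ = 0 := by
  rcases eq_or_ne u 0 with rfl | hu0
  · simp
  have h := psi_mul hδ u u⁻¹
  rw [mul_inv_cancel₀ hu0, psi_one hδ, hu, zero_mul, add_zero] at h
  exact (mul_eq_zero.mp h.symm).resolve_left (map_ne_zero σ |>.mpr hu0)

end Psi

section LeftCombination

variable (i : D →ₐ[k] Q)

noncomputable def leftComb {α : Type*} (v : α → Q) : (α →₀ D) →+ Q :=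
  liftAddHom fun a => (AddMonoidHom.mulRight (v a)).comp (i : D →+ Q)

variable {i} {α : Type*} (v : α → Q)

@[simp]
theorem leftComb_single (a : α) (d : D) : leftComb i v (single a d) = i d * v a :=
  liftAddHom_apply_single _ _ _

theorem leftComb_smul (d : D) (c : α →₀ D) :
    leftComb i v (d • c) = i d * leftComb i v c := by
  induction c using Finsupp.induction_linear with
  | zero => simp
  | add c c' hc hc' => rw [smul_add, map_add, map_add, hc, hc', mul_add]
  | single a e =>
    rw [smul_single, smul_eq_mul, leftComb_single, leftComb_single, map_mul, mul_assoc]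

end LeftCombination

section LeftPolynomials

variable {σ : D →ₐ[k] D} {δ : D →ₗ[k] D} {i : D →ₐ[k] Q} {x : Q}

theorem one_sub_mul_map (hQ : IsOreQuotient k D σ δ Q i x) (a : D) :
    (1 - x) * i a = i (σ a) * (1 - x) - i (psi σ δ a) := by
  simp only [sub_mul, one_mul, hQ.rel, psi_apply, map_add, map_sub, mul_sub, mul_one]
  abel

theorem eq_zero_of_leftComb_pow_eq_zero (hQ : IsOreQuotient k D σ δ Q i x)
    {d : ℕ →₀ D} (hd : leftComb i (x ^ ·) d = 0) : d = 0 := by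
  obtain ⟨N, hN⟩ := d.support.exists_nat_subset_range
  rw [leftComb, liftAddHom_apply, sum_of_support_subset d hN _ (by simp)] at hd
  ext n
  by_cases hn : n < N
  · exact hQ.indep N d (by simpa using hd) n hn
  · exact notMem_support_iff.mp fun h => hn (Finset.mem_range.mp (hN h))

theorem one_sub_ne_zero (hQ : IsOreQuotient k D σ δ Q i x) : (1 : Q) - x ≠ 0 := by
  intro h
  have h01 := eq_zero_of_leftComb_pow_eq_zero hQ (d := single 0 1 - single 1 1) (by simpa using h)
  simpa using DFunLike.congr_fun h01 0

theorem one_sub_mul_leftComb_pow (hQ : IsOreQuotient k D σ δ Q i x) (d : ℕ →₀ D) :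
    (1 - x) * leftComb i (x ^ ·) d = leftComb i (x ^ ·)
      (d - d.mapRange δ (map_zero δ) - (d.mapRange σ (map_zero σ)).mapDomain (· + 1)) := by
  induction d using Finsupp.induction_linear with
  | zero => simp
  | add d d' hd hd' =>
    rw [map_add, mul_add, hd, hd', ← map_add]
    congr 1
    rw [mapRange_add' (f := σ), mapRange_add' (f := δ), mapDomain_add]
    abel
  | single n a =>
    simp only [leftComb_single, mapRange_single, mapDomain_single, map_sub]
    rw [sub_mul, one_mul, ← mul_assoc, hQ.rel, pow_succ']
    noncomm_ring

theorem one_sub_mul_leftComb_pow_ne_one (hQ : IsOreQuotient k D σ δ Q i x)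
    (d : ℕ →₀ D) : (1 - x) * leftComb i (x ^ ·) d ≠ 1 := by
  intro h
  have hd : d - d.mapRange δ (map_zero δ) - (d.mapRange σ (map_zero σ)).mapDomain (· + 1)
      = single 0 1 := by
    refine sub_eq_zero.mp (eq_zero_of_leftComb_pow_eq_zero hQ ?_)
    rw [map_sub, ← one_sub_mul_leftComb_pow hQ, h, leftComb_single, pow_zero, map_one, mul_one,
      sub_self]
  rcases eq_or_ne d 0 with rfl | hd0
  · simpa using DFunLike.congr_fun hd 0
  -- compare the coefficients of `x ^ (n + 1)`, where `x ^ n` is the top power in `d`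
  set n := d.support.max' (support_nonempty_iff.mpr hd0)
  have hn : d n ≠ 0 := mem_support_iff.mp (Finset.max'_mem _ _)
  have hn1 : d (n + 1) = 0 :=
    notMem_support_iff.mp fun h => by have := Finset.le_max' _ _ h; omega
  have hshift : (d.mapRange σ (map_zero σ)).mapDomain (· + 1) (n + 1) = σ (d n) := by
    simpa using mapDomain_apply (add_left_injective 1) (d.mapRange σ (map_zero σ)) n
  have := DFunLike.congr_fun hd (n + 1)
  simp [hshift, hn1, hn] at this

theorem eq_zero_of_mul_inv_one_sub_mem_range (hQ : IsOreQuotient k D σ δ Q i x)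
    {a : D} (ha : i a * (1 - x)⁻¹ ∈ (leftComb i (x ^ ·)).range) : a = 0 := by
  by_contra ha0
  obtain ⟨d, hd⟩ := ha
  apply one_sub_mul_leftComb_pow_ne_one hQ (a⁻¹ • d)
  rw [leftComb_smul, hd, ← mul_assoc (i a⁻¹), ← map_mul, inv_mul_cancel₀ ha0, map_one, one_mul,
    mul_inv_cancel₀ (one_sub_ne_zero hQ)]

end LeftPolynomials

section Words

variable {ι : Type*} (i : D →ₐ[k] Q) (x : Q) (g : ι → D)

def word (l : List ι) : Q := (l.map fun j => i (g j) * (1 - x)⁻¹).prod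

@[simp]
theorem word_nil : word i x g [] = 1 := rfl

@[simp]
theorem word_cons (j : ι) (l : List ι) :
    word i x g (j :: l) = i (g j) * (1 - x)⁻¹ * word i x g l := rfl

noncomputable def descend : (List ι →₀ D) →+ (List ι →₀ D) :=
  liftAddHom fun
    | [] => 0
    | j :: f => (singleAddHom f).comp (AddMonoidHom.mulRight (g j))

@[simp]
theorem descend_single_nil (a : D) : descend g (single [] a) = 0 :=
  liftAddHom_apply_single _ _ _

@[simp]
theorem descend_single_cons (j : ι) (l : List ι) (a : D) :
    descend g (single (j :: l) a) = single l (a * g j) :=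
  liftAddHom_apply_single _ _ _

theorem descend_apply [Fintype ι] (c : List ι →₀ D) (f : List ι) :
    descend g c f = ∑ j, c (j :: f) * g j := by
  classical
  induction c using Finsupp.induction_linear with
  | zero => simp
  | add c c' hc hc' => simp [hc, hc', add_mul, Finset.sum_add_distrib]
  | single l a =>
    rcases l with _ | ⟨j, l⟩
    · simp
    · by_cases hf : f = l <;> simp [single_apply, hf]

noncomputable def wordComb : (List ι →₀ D) →+ Q := leftComb i (word i x g)

noncomputable def yWordComb : (List ι →₀ D) →+ Q :=
  leftComb i fun l => (1 - x)⁻¹ * word i x g l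

theorem wordComb_eq (c : List ι →₀ D) :
    wordComb i x g c = i (c []) + yWordComb i x g (descend g c) := by
  induction c using Finsupp.induction_linear with
  | zero => simp
  | add c c' hc hc' => rw [map_add, hc, hc', map_add, Finsupp.add_apply, map_add, map_add]; abel
  | single l a =>
    rcases l with _ | ⟨j, l⟩
    · simp [wordComb]
    · simp only [wordComb, yWordComb, descend_single_cons, leftComb_single, word_cons, map_mul]
      simp [mul_assoc]

end Words

section Relations

variable {ι : Type*} {σ : D →ₐ[k] D} {δ : D →ₗ[k] D} {i : D →ₐ[k] Q} {x : Q} {g : ι → D}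

variable (σ δ) in
noncomputable def oreStep (g : ι → D) (c : List ι →₀ D) : List ι →₀ D :=
  descend g (c.mapRange σ (map_zero σ)) - c.mapRange (psi σ δ) (map_zero _)

theorem oreStep_apply [Fintype ι] (c : List ι →₀ D) (f : List ι) :
    oreStep σ δ g c f = ∑ j, σ (c (j :: f)) * g j - psi σ δ (c f) := by
  simp [oreStep, descend_apply]

theorem one_sub_mul_yWordComb (hQ : IsOreQuotient k D σ δ Q i x) (c : List ι →₀ D) :
    (1 - x) * yWordComb i x g c = i (σ (c [])) + yWordComb i x g (oreStep σ δ g c) := by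
  have h : (1 - x) * yWordComb i x g c = wordComb i x g (c.mapRange σ (map_zero σ))
      - yWordComb i x g (c.mapRange (psi σ δ) (map_zero _)) := by
    induction c using Finsupp.induction_linear with
    | zero => simp
    | add c c' hc hc' =>
      rw [map_add, mul_add, hc, hc', mapRange_add' (f := σ), mapRange_add' (f := psi σ δ),
        map_add, map_add]
      abel
    | single l a =>
      simp only [yWordComb, wordComb, leftComb_single, mapRange_single]
      rw [← mul_assoc, one_sub_mul_map hQ a, sub_mul, mul_assoc _ (1 - x), ← mul_assoc (1 - x),
        mul_inv_cancel₀ (one_sub_ne_zero hQ), one_mul]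
  rw [h, wordComb_eq, oreStep, map_sub, mapRange_apply, add_sub_assoc]

variable (i x g) in
noncomputable def relations : AddSubgroup (List ι →₀ D) :=
  (leftComb i (x ^ ·)).range.comap (yWordComb i x g)

theorem smul_mem_relations {c : List ι →₀ D} (hc : c ∈ relations i x g) (a : D) :
    a • c ∈ relations i x g := by
  obtain ⟨d, hd⟩ := hc
  exact ⟨a • d, by rw [leftComb_smul, hd, yWordComb, leftComb_smul]⟩

theorem oreStep_mem_relations (hQ : IsOreQuotient k D σ δ Q i x) {c : List ι →₀ D}
    (hc : c ∈ relations i x g) : oreStep σ δ g c ∈ relations i x g := by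
  obtain ⟨d, hd⟩ := hc
  have h := one_sub_mul_yWordComb hQ (g := g) c
  rw [← hd, one_sub_mul_leftComb_pow hQ, eq_comm, ← eq_sub_iff_add_eq'] at h
  rw [relations, AddSubgroup.mem_comap, h]
  exact sub_mem ⟨_, rfl⟩ ⟨single 0 (σ (c [])), by simp⟩

end Relations

/-- Normalize a vector of minimal support in `N` to have an entry `1`: applying `ψ` kills that
entry, so by minimality it kills every entry. -/
theorem exists_ne_zero_forall_eq_zero_of_mapRange_mem {W : Type*} {ψ : D → D} (hψ0 : ψ 0 = 0)
    (hψ1 : ψ 1 = 0) {N : Set (W →₀ D)} (hsmul : ∀ a : D, ∀ v ∈ N, a • v ∈ N)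
    (hmap : ∀ v ∈ N, v.mapRange ψ hψ0 ∈ N) {v : W →₀ D} (hv : v ∈ N) (hv0 : v ≠ 0) :
    ∃ w ∈ N, w ≠ 0 ∧ ∀ l, ψ (w l) = 0 := by
  classical
  induction hn : v.support.card using Nat.strong_induction_on generalizing v with
  | _ n ih =>
  obtain ⟨l₀, hl₀⟩ := support_nonempty_iff.mpr hv0
  set w := (v l₀)⁻¹ • v
  have hw : w ∈ N := hsmul _ _ hv
  have hwl₀ : w l₀ = 1 := inv_mul_cancel₀ (mem_support_iff.mp hl₀)
  by_cases hψw : w.mapRange ψ hψ0 = 0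
  · refine ⟨w, hw, fun h => by simp [h] at hwl₀, fun l => ?_⟩
    simpa using DFunLike.congr_fun hψw l
  have hsub : (w.mapRange ψ hψ0).support ⊆ v.support.erase l₀ := by
    intro l hl
    refine Finset.mem_erase.mpr ⟨fun h => ?_, support_smul (support_mapRange hl)⟩
    subst h
    simp [hwl₀, hψ1] at hl
  refine ih _ ?_ (hmap w hw) hψw rfl
  calc _ ≤ (v.support.erase l₀).card := Finset.card_le_card hsub
    _ < n := hn ▸ Finset.card_erase_lt_of_mem hl₀

section Freeness

variable {ι : Type*} [Fintype ι] {σ : D →ₐ[k] D} {δ : D →ₗ[k] D} {i : D →ₐ[k] Q} {x : Q}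
  {g : ι → D}

-- With `E = ker ψ` and `g = ![b, 1]`, these are conditions (1) and (2) of the theorem.
variable (σ δ) in
def PsiIndependent (g : ι → D) : Prop :=
  ∀ e : ι → D, (∀ j, psi σ δ (e j) = 0) → ∑ j, σ (e j) * g j = 0 → ∀ j, e j = 0

variable (σ δ) in
def PsiCriterion (g : ι → D) : Prop :=
  ∀ (u : D) (e : ι → D), (∀ j, psi σ δ (e j) = 0) → psi σ δ u = ∑ j, σ (e j) * g j →
    psi σ δ u = 0

theorem oreStep_apply_of_le_length {n : ℕ} {c : List ι →₀ D}
    (hc : ∀ l : List ι, n < l.length → c l = 0) {f : List ι} (hf : n ≤ f.length) :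
    oreStep σ δ g c f = -psi σ δ (c f) := by
  rw [oreStep_apply, Finset.sum_eq_zero fun j _ => ?_, zero_sub]
  rw [hc (j :: f) (by simp; omega), map_zero, zero_mul]

theorem apply_eq_zero_of_psi_apply_eq_zero (hQ : IsOreQuotient k D σ δ Q i x)
    (hind : PsiIndependent σ δ g) (hcrit : PsiCriterion σ δ g) {m : ℕ}
    (ih : ∀ c ∈ relations i x g, (∀ l : List ι, m < l.length → c l = 0) → c = 0)
    {c : List ι →₀ D} (hc : c ∈ relations i x g)
    (hbd : ∀ l : List ι, m + 1 < l.length → c l = 0)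
    (hψ : ∀ l : List ι, l.length = m + 1 → psi σ δ (c l) = 0) :
    ∀ l : List ι, l.length = m + 1 → c l = 0 := by
  have hstep : oreStep σ δ g c = 0 := by
    refine ih _ (oreStep_mem_relations hQ hc) fun f hf => ?_
    rw [oreStep_apply_of_le_length hbd hf, neg_eq_zero]
    rcases Nat.lt_or_ge (m + 1) f.length with h | h
    · rw [hbd f h, map_zero]
    · exact hψ f (by omega)
  rintro (_ | ⟨j, f⟩) hl
  · simp at hl
  have hE : ∀ j', psi σ δ (c (j' :: f)) = 0 := fun j' => hψ _ (by simpa using hl)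
  have hsum : ∑ j', σ (c (j' :: f)) * g j' = psi σ δ (c f) := by
    simpa [oreStep_apply, sub_eq_zero] using DFunLike.congr_fun hstep f
  exact hind _ hE (hsum.trans (hcrit _ _ hE hsum.symm)) j

theorem apply_eq_zero_of_length_eq_succ (hQ : IsOreQuotient k D σ δ Q i x)
    (hδ : ∀ a b : D, δ (a * b) = σ a * δ b + δ a * b)
    (hind : PsiIndependent σ δ g) (hcrit : PsiCriterion σ δ g) {m : ℕ}
    (ih : ∀ c ∈ relations i x g, (∀ l : List ι, m < l.length → c l = 0) → c = 0)
    {c : List ι →₀ D} (hc : c ∈ relations i x g)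
    (hbd : ∀ l : List ι, m + 1 < l.length → c l = 0) :
    ∀ l : List ι, l.length = m + 1 → c l = 0 := by
  let top : (List ι →₀ D) → (List ι →₀ D) := Finsupp.filter fun l => l.length = m + 1
  let N : Set (List ι →₀ D) :=
    {v | ∃ c ∈ relations i x g, (∀ l : List ι, m + 1 < l.length → c l = 0) ∧ top c = v}
  by_contra! hne
  obtain ⟨l, hl, hcl⟩ := hne
  have htop : top c ≠ 0 := fun h => hcl (by simpa [top, hl] using DFunLike.congr_fun h l)
  have hsmul : ∀ a : D, ∀ v ∈ N, a • v ∈ N := by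
    rintro a _ ⟨c, hc, hbd, rfl⟩
    exact ⟨a • c, smul_mem_relations hc a, fun l hl => by simp [hbd l hl], filter_smul⟩
  -- `ψ` applied to the top layer of `c` is the top layer of `-oreStep c`
  have hmap : ∀ v ∈ N, v.mapRange (psi σ δ) (map_zero _) ∈ N := by
    rintro _ ⟨c, hc, hbd, rfl⟩
    refine ⟨-oreStep σ δ g c, neg_mem (oreStep_mem_relations hQ hc), fun l hl => ?_, ?_⟩
    · simp [oreStep_apply_of_le_length hbd hl.le, hbd l hl]
    · ext l
      by_cases hl : l.length = m + 1
      · simp [top, hl, oreStep_apply_of_le_length hbd hl.ge]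
      · simp [top, hl]
  obtain ⟨_, ⟨c', hc', hbd', rfl⟩, hne', hψ⟩ := exists_ne_zero_forall_eq_zero_of_mapRange_mem
    (map_zero (psi σ δ)) (psi_one hδ) hsmul hmap ⟨c, hc, hbd, rfl⟩ htop
  have := apply_eq_zero_of_psi_apply_eq_zero hQ hind hcrit ih hc' hbd' fun l hl => by
    simpa [top, hl] using hψ l
  exact hne' (ext fun l => by by_cases hl : l.length = m + 1 <;> simp [top, hl, this])

theorem eq_zero_of_mem_relations (hQ : IsOreQuotient k D σ δ Q i x)
    (hδ : ∀ a b : D, δ (a * b) = σ a * δ b + δ a * b)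
    (hind : PsiIndependent σ δ g) (hcrit : PsiCriterion σ δ g)
    {c : List ι →₀ D} (hc : c ∈ relations i x g) : c = 0 := by
  obtain ⟨m, hm⟩ : ∃ m, ∀ l : List ι, m < l.length → c l = 0 :=
    ⟨c.support.sup List.length, fun l hl =>
      notMem_support_iff.mp fun h => (Finset.le_sup h).not_gt hl⟩
  induction m generalizing c with
  | zero =>
    have hc0 : c = single [] (c []) := by
      ext (_ | ⟨j, l⟩)
      · simp
      · simp [hm (j :: l) (by simp)]
    obtain ⟨d, hd⟩ := hc
    rw [hc0, yWordComb, leftComb_single, word_nil, mul_one] at hd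
    rw [hc0, eq_zero_of_mul_inv_one_sub_mem_range hQ ⟨d, hd⟩, single_zero]
  | succ m ih =>
    have htop := apply_eq_zero_of_length_eq_succ hQ hδ hind hcrit (fun c hc => ih hc) hc hm
    exact ih hc fun l hl => if h : l.length = m + 1 then htop l h else hm l (by omega)

end Freeness

section Pair

variable {σ : D →ₐ[k] D} {δ : D →ₗ[k] D} {b : D}

theorem psiIndependent_pair (hδ : ∀ a b : D, δ (a * b) = σ a * δ b + δ a * b)
    (hb : b ∉ σ '' {u | psi σ δ u = 0}) : PsiIndependent σ δ ![b, 1] := by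
  intro e he hsum
  simp only [Fin.sum_univ_two, Matrix.cons_val_zero, Matrix.cons_val_one, mul_one] at hsum
  have h0 : e 0 = 0 := by
    by_contra h0
    refine hb ⟨-((e 0)⁻¹ * e 1), ?_, ?_⟩
    · rw [Set.mem_ofPred_eq, map_neg, psi_mul hδ, psi_inv hδ (he 0), he 1, mul_zero, zero_mul,
        add_zero, neg_zero]
    · rw [map_neg, map_mul, map_inv₀, eq_neg_of_add_eq_zero_right hsum, mul_neg, neg_neg,
        ← mul_assoc, inv_mul_cancel₀ ((map_ne_zero σ).mpr h0), one_mul]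
  intro j
  fin_cases j
  · exact h0
  · simpa [h0] using hsum

theorem psiCriterion_pair
    (hb : ∀ u : D, (∃ α ∈ σ '' {u | psi σ δ u = 0}, ∃ β ∈ σ '' {u | psi σ δ u = 0},
      psi σ δ u = α + β * b) → psi σ δ u = 0) : PsiCriterion σ δ ![b, 1] := by
  intro u e he h
  exact hb u ⟨σ (e 1), ⟨e 1, he 1, rfl⟩, σ (e 0), ⟨e 0, he 0, rfl⟩, by
    simpa [Fin.sum_univ_two, add_comm] using h⟩

end Pair

end CommRing

section FreeSubalgebra

variable {k : Type*} [Field k] [Algebra k D] [Algebra k Q] {σ : D →ₐ[k] D} {δ : D →ₗ[k] D}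
  {i : D →ₐ[k] Q} {x : Q}

theorem PsiIndependent.linearIndependent {ι : Type*} [Fintype ι] {g : ι → D}
    (hδ : ∀ a b : D, δ (a * b) = σ a * δ b + δ a * b) (hg : PsiIndependent σ δ g) :
    LinearIndependent k g := by
  refine Fintype.linearIndependent_iff.mpr fun κ hκ j => (algebraMap k D).injective ?_
  have := hg (fun j => algebraMap k D (κ j)) (fun j => psi_algebraMap hδ _)
    (by simpa [Algebra.smul_def] using hκ) j
  simpa using this

theorem linearIndependent_word {ι : Type*} [Fintype ι] {g : ι → D}
    (hQ : IsOreQuotient k D σ δ Q i x) (hδ : ∀ a b : D, δ (a * b) = σ a * δ b + δ a * b)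
    (hind : PsiIndependent σ δ g) (hcrit : PsiCriterion σ δ g) :
    LinearIndependent k (word i x g) := by
  rw [linearIndependent_iff]
  intro κ hκ
  set c := κ.mapRange (algebraMap k D) (map_zero _)
  have hcomb : Finsupp.linearCombination k (word i x g) κ = wordComb i x g c := by
    rw [linearCombination_apply, wordComb, leftComb, liftAddHom_apply,
      sum_mapRange_index (by simp)]
    simp [Algebra.smul_def]
  rw [hcomb, wordComb_eq, ← eq_neg_iff_add_eq_zero] at hκ
  have hdesc : descend g c = 0 :=
    eq_zero_of_mem_relations hQ hδ hind hcrit ⟨single 0 (-c []), by simp [hκ]⟩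
  ext (_ | ⟨j, f⟩)
  · rw [hdesc, map_zero, neg_zero] at hκ
    simpa [c] using hκ
  · have hsum : ∑ j, κ (j :: f) • g j = 0 := by
      simpa [descend_apply, c, Algebra.smul_def] using DFunLike.congr_fun hdesc f
    have hg : LinearIndependent k g := hind.linearIndependent hδ
    exact Fintype.linearIndependent_iff.mp hg (fun j => κ (j :: f)) hsum j

end FreeSubalgebra

end OreQuotient

/-- Theorem 2.2 of the paper.  Let `D` be a division algebra over a field
`k`, `σ` a `k`-algebra automorphism of `D`, `δ` a `σ`-derivation of `D` over `k`; let
`ψ = (σ - 1) + δ` and `E = {u ∈ D : ψ(u) = 0}`.  Let `b ∈ D`.  If (1) `b ∉ σ(E)` and (2) for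
all `u ∈ D`, `ψ(u) ∈ σ(E) + σ(E)·b` implies `u ∈ E`, then in the quotient division ring
`Q = D(x; σ, δ)` the `k`-subalgebra generated by `b(1-x)⁻¹` and `(1-x)⁻¹` is free on those
two generators. -/
theorem free_on_two_generators_of_psi_criterion
    (k : Type*) [Field k] (D : Type*) [DivisionRing D] [Algebra k D]
    (σ : D ≃ₐ[k] D) (δ : D →ₗ[k] D)
    (hδ : ∀ a b : D, δ (a * b) = σ a * δ b + δ a * b)
    (b : D)
    (hb1 : b ∉ ⇑σ '' {u : D | σ u - u + δ u = 0})
    (hb2 : ∀ u : D,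
      (∃ α ∈ ⇑σ '' {u : D | σ u - u + δ u = 0}, ∃ β ∈ ⇑σ '' {u : D | σ u - u + δ u = 0},
        σ u - u + δ u = α + β * b) → σ u - u + δ u = 0)
    (Q : Type*) [DivisionRing Q] [Algebra k Q] (i : D →ₐ[k] Q) (x : Q)
    (hQ : IsOreQuotient k D σ.toAlgHom δ Q i x) :
    Function.Injective ⇑(FreeAlgebra.lift k ![i b * (1 - x)⁻¹, (1 - x)⁻¹]) := by
  have hgen : ![i b * (1 - x)⁻¹, (1 - x)⁻¹] = fun j => i (![b, 1] j) * (1 - x)⁻¹ := by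
    ext j
    fin_cases j <;> simp
  rw [hgen]
  exact FreeAlgebra.injective_lift_of_linearIndependent <|
    OreQuotient.linearIndependent_word hQ hδ (OreQuotient.psiIndependent_pair hδ hb1)
      (OreQuotient.psiCriterion_pair hb2)
end

section
/- Let K be a field with automorphism σ whose fixed field is k, and suppose there is an element a ∈ K on an infinite σ-orbit such that K = k(σ^n(a) : n ∈ ℤ). If K is not finitely generated as a field extension of k, then the quotient division ring K(x;σ) contains a free k-subalgebra on two generators. -/
open scoped BigOperators

/-!
Either `σ⁻¹ a ∉ k(a, σ a, …, σⁿ a)` for all `n`, or `σ a ∉ k(a, σ⁻¹ a, …, σ⁻ⁿ a)` for all `n`: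
otherwise a finite stretch of the orbit of `a` generates a field stable under `σ` and `σ⁻¹`, hence
all of `K`. Replacing `(σ, x)` by `(σ⁻¹, x⁻¹)` in the second case, put `X = x` and `Y = a x`. A word
`w` of length `n` in `X, Y` equals `c_w xⁿ` with `c_w = ∏ⱼ σʲ(a^{wⱼ})`. The `c_w` with `|w| = n` are
linearly independent over `k`, by induction on `n` through the tower `k ⊆ σ(k(a, …, σⁿ⁻¹ a)) ⊆ K`,
over which `1, a` are independent because `σ⁻¹ a ∉ k(a, …, σⁿ⁻¹ a)`. Since the powers of `x` are
independent over `K`, all words are linearly independent, so `X` and `Y` generate a free algebra.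
-/

open Function Finset IntermediateField

theorem FreeAlgebra.lift_injective_of_linearIndependent {R X A : Type*} [CommSemiring R]
    [Semiring A] [Algebra R A] (g : X → A)
    (hg : LinearIndependent R fun w : FreeMonoid X => FreeMonoid.lift g w) :
    Injective (FreeAlgebra.lift R g) := by
  let b := (MonoidAlgebra.basis (FreeMonoid X) R).map
    (FreeAlgebra.equivMonoidAlgebraFreeMonoid (R := R) (X := X)).symm.toLinearEquiv
  have hb : (FreeAlgebra.lift R g).toLinearMap = b.constr R fun w => FreeMonoid.lift g w := by
    refine b.ext fun w => ?_
    have hbw : b w = FreeMonoid.lift (ι R) w := by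
      simp [b, FreeAlgebra.equivMonoidAlgebraFreeMonoid]
    rw [b.constr_basis, AlgHom.toLinearMap_apply, hbw]
    simp [FreeMonoid.lift_apply, map_list_prod, Function.comp_def]
  simpa [← hb] using b.injective_constr_of_linearIndependent (R₂ := R) hg

def PowersLeftIndependent {K Q : Type*} [Zero K] [Semiring Q] (i : K → Q) (X : Q) : Prop :=
  ∀ (n : ℕ) (c : ℕ → K), ∑ j ∈ range n, i (c j) * X ^ j = 0 → ∀ j < n, c j = 0

/-- Multiply on the right by `X ^ (n - 1)` and reverse the order of the coefficients. -/
theorem PowersLeftIndependent.inv {K Q : Type*} [Zero K] [DivisionRing Q] {i : K → Q} {X : Q}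
    (hX : PowersLeftIndependent i X) : PowersLeftIndependent i X⁻¹ := by
  rcases eq_or_ne X 0 with rfl | hX₀
  · simpa using hX
  unfold PowersLeftIndependent at *
  intro n c hc j hj
  have hrev : ∑ m ∈ range n, i (c (n - 1 - m)) * X ^ m =
      (∑ m ∈ range n, i (c m) * X⁻¹ ^ m) * X ^ (n - 1) := by
    rw [← sum_range_reflect, sum_mul]
    refine sum_congr rfl fun m hm => ?_
    have hm : m < n := mem_range.1 hm
    rw [Nat.sub_sub_self (by omega), mul_assoc, inv_pow,
      ← Nat.add_sub_of_le (by omega : m ≤ n - 1), pow_add,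
      inv_mul_cancel_left₀ (pow_ne_zero _ hX₀), Nat.add_sub_cancel_left]
  have := hX n _ (by rw [hrev, hc, zero_mul]) (n - 1 - j) (by omega)
  rwa [Nat.sub_sub_self (by omega)] at this

/-- Group a linear relation by degree: each homogeneous part is a coefficient of a power of `X`. -/
theorem linearIndependent_mul_pow {k K Q ι : Type*} [CommRing k] [Ring K] [Ring Q] [Algebra k K]
    [Algebra k Q] {i : K →ₐ[k] Q} {X : Q} (hX : PowersLeftIndependent i X) {b : ι → K}
    {deg : ι → ℕ} (hb : ∀ n, LinearIndepOn k b {w | deg w = n}) :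
    LinearIndependent k fun w => i (b w) * X ^ deg w := by
  classical
  unfold PowersLeftIndependent at hX
  refine linearIndependent_iff'.2 fun s g hs w hw => ?_
  let c (n : ℕ) : K := ∑ v ∈ s with deg v = n, g v • b v
  have hmaps : ∀ v ∈ s, deg v ∈ range (s.sup deg + 1) :=
    fun v hv => mem_range.2 (Nat.lt_succ_of_le (le_sup hv))
  have hc : ∑ n ∈ range (s.sup deg + 1), i (c n) * X ^ n = 0 := by
    rw [← hs, ← sum_fiberwise_of_maps_to hmaps]
    refine sum_congr rfl fun n _ => ?_
    rw [map_sum, sum_mul]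
    refine sum_congr rfl fun v hv => ?_
    rw [(mem_filter.1 hv).2, map_smul, smul_mul_assoc]
  refine linearIndepOn_iff'.1 (hb (deg w)) (s.filter (deg · = deg w)) g
    (fun v hv => (mem_filter.1 hv).2) (hX _ c hc _ (mem_range.1 (hmaps w hw))) w
    (mem_filter.2 ⟨hw, rfl⟩)

def wordCoeff {M ι : Type*} [Monoid M] (τ : M → M) (e : ι → M) : List ι → M
  | [] => 1
  | b :: l => e b * τ (wordCoeff τ e l)

theorem List.prod_map_mul_eq_wordCoeff {M Q ι F : Type*} [Monoid M] [Monoid Q] [FunLike F M Q]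
    [MonoidHomClass F M Q] (i : F) (τ : M → M) (X : Q) (hX : ∀ b, X * i b = i (τ b) * X)
    (e : ι → M) (l : List ι) :
    (l.map fun b => i (e b) * X).prod = i (wordCoeff τ e l) * X ^ l.length := by
  induction l with
  | nil => simp [wordCoeff]
  | cons b l ih =>
    rw [List.map_cons, List.prod_cons, ih, wordCoeff, map_mul, List.length_cons, pow_succ',
      mul_assoc, ← mul_assoc X, hX, mul_assoc, mul_assoc]

section

variable {k K : Type*} [Field k] [Field K] [Algebra k K]

def orbitField (τ : K ≃ₐ[k] K) (a : K) (n : ℕ) : IntermediateField k K :=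
  adjoin k ((fun j : ℕ => (τ ^ j) a) '' Set.Iio n)

namespace orbitField

variable (τ : K ≃ₐ[k] K) (a : K) (n : ℕ)

theorem pow_apply_mem {j : ℕ} (hj : j < n) : (τ ^ j) a ∈ orbitField τ a n :=
  subset_adjoin _ _ ⟨j, hj, rfl⟩

theorem fg : (orbitField τ a n).FG :=
  fg_adjoin_of_finite ((Set.finite_Iio n).image _)

variable {τ a n}

theorem mono {m : ℕ} (h : n ≤ m) : orbitField τ a n ≤ orbitField τ a m :=
  adjoin.mono _ _ _ (Set.image_mono (Set.Iio_subset_Iio h))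

theorem apply_mem_succ {b : K} (hb : b ∈ orbitField τ a n) : τ b ∈ orbitField τ a (n + 1) := by
  suffices orbitField τ a n ≤ (orbitField τ a (n + 1)).comap (τ : K →ₐ[k] K) from this hb
  refine adjoin_le_iff.2 ?_
  rintro _ ⟨j, hj, rfl⟩
  show τ ((τ ^ j) a) ∈ orbitField τ a (n + 1)
  rw [← AlgEquiv.mul_apply, ← pow_succ']
  exact pow_apply_mem τ a (n + 1) (Nat.succ_lt_succ hj)

theorem inv_apply_mem_succ (ha : τ⁻¹ a ∈ orbitField τ a n) {b : K}
    (hb : b ∈ orbitField τ a (n + 1)) : τ⁻¹ b ∈ orbitField τ a (n + 1) := by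
  suffices orbitField τ a (n + 1) ≤ (orbitField τ a (n + 1)).comap (τ⁻¹).toAlgHom from this hb
  refine adjoin_le_iff.2 ?_
  rintro _ ⟨_ | j, hj, rfl⟩
  · show τ⁻¹ ((τ ^ 0) a) ∈ orbitField τ a (n + 1)
    rw [pow_zero, AlgEquiv.one_apply]
    exact mono n.le_succ ha
  · show τ⁻¹ ((τ ^ (j + 1)) a) ∈ orbitField τ a (n + 1)
    rw [pow_succ', AlgEquiv.mul_apply, AlgEquiv.aut_inv, AlgEquiv.symm_apply_apply]
    exact pow_apply_mem τ a (n + 1) (Nat.lt_of_succ_lt hj)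

theorem inv_pow_apply_mem (ha : τ⁻¹ a ∈ orbitField τ a n) (t : ℕ) :
    (τ⁻¹ ^ t) a ∈ orbitField τ a (n + 1) := by
  induction t with
  | zero => exact pow_apply_mem τ a (n + 1) n.succ_pos
  | succ t ih => rw [pow_succ', AlgEquiv.mul_apply]; exact inv_apply_mem_succ ha ih

end orbitField

theorem forall_inv_apply_notMem_orbitField_or (σ : K ≃ₐ[k] K) (a : K)
    (hgen : adjoin k (Set.range fun n : ℤ => (σ ^ n) a) = ⊤)
    (hnfg : ¬ (⊤ : IntermediateField k K).FG) :
    (∀ n, σ⁻¹ a ∉ orbitField σ a n) ∨ ∀ n, σ⁻¹⁻¹ a ∉ orbitField σ⁻¹ a n := by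
  by_contra! ⟨⟨n₀, h₀⟩, ⟨n₁, h₁⟩⟩
  set L := orbitField σ a (n₀ + 1) ⊔ orbitField σ⁻¹ a (n₁ + 1)
  have hL : L = ⊤ := by
    refine eq_top_iff.2 (hgen ▸ adjoin_le_iff.2 ?_)
    rintro _ ⟨m, rfl⟩
    obtain ⟨t, rfl | rfl⟩ := Int.eq_nat_or_neg m
    · simpa using le_sup_right (a := orbitField σ a (n₀ + 1)) (orbitField.inv_pow_apply_mem h₁ t)
    · simpa using le_sup_left (b := orbitField σ⁻¹ a (n₁ + 1)) (orbitField.inv_pow_apply_mem h₀ t)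
  exact hnfg (hL ▸ fg_sup (orbitField.fg _ _ _) (orbitField.fg _ _ _))

theorem wordCoeff_mem_orbitField (τ : K ≃ₐ[k] K) (a : K) (l : List (Fin 2)) :
    wordCoeff τ ![1, a] l ∈ orbitField τ a l.length := by
  induction l with
  | nil => exact one_mem _
  | cons b l ih =>
    refine mul_mem ?_ (orbitField.apply_mem_succ ih)
    fin_cases b
    · exact one_mem _
    · exact orbitField.pow_apply_mem τ a _ l.length.succ_pos

theorem linearIndepOn_wordCoeff (τ : K ≃ₐ[k] K) (a : K)
    (hnew : ∀ n, τ⁻¹ a ∉ orbitField τ a n) (n : ℕ) :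
    LinearIndepOn k (wordCoeff τ ![1, a]) {l | l.length = n} := by
  induction n with
  | zero =>
    have : {l : List (Fin 2) | l.length = 0} = {[]} := by ext; simp
    rw [this, linearIndepOn_singleton_iff]
    exact one_ne_zero
  | succ n ih =>
    set F := (orbitField τ a n).map (τ : K →ₐ[k] K)
    have haF : a ∉ F := by
      rintro ⟨y, hy, hya⟩
      have hy' : τ⁻¹ a = y := by rw [← hya]; simp
      exact hnew n (hy' ▸ hy)
    have hF : LinearIndependent F ![1, a] :=
      (LinearIndependent.pair_iff' one_ne_zero).2 fun s hs =>
        haF (by simp [← hs, Algebra.smul_def])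
    have hmem (l : List.Vector (Fin 2) n) : wordCoeff τ ![1, a] l.1 ∈ orbitField τ a n := by
      simpa only [l.2] using wordCoeff_mem_orbitField τ a l.1
    let c : List.Vector (Fin 2) n → F := fun l => ⟨τ (wordCoeff τ ![1, a] l.1), _, hmem l, rfl⟩
    have hc : LinearIndependent k c :=
      .of_comp F.val.toLinearMap (ih.map' τ.toLinearMap (LinearMap.ker_eq_bot.2 τ.injective))
    let E : List.Vector (Fin 2) n × Fin 2 ≃ List.Vector (Fin 2) (n + 1) :=
      { toFun p := p.1.cons p.2
        invFun l := (l.tail, l.head)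
        left_inv p := by simp
        right_inv l := l.cons_head_tail }
    refine (linearIndependent_equiv' E ?_).1 (linearIndependent_smul hc hF)
    funext p
    exact mul_comm _ _

theorem containsFreeSubalgebra_of_forall_inv_apply_notMem_orbitField {Q : Type*} [Ring Q]
    [Algebra k Q] (τ : K ≃ₐ[k] K) (a : K) (hnew : ∀ n, τ⁻¹ a ∉ orbitField τ a n)
    (i : K →ₐ[k] Q) (X : Q) (hXi : ∀ b, X * i b = i (τ b) * X)
    (hX : PowersLeftIndependent i X) :
    ContainsFreeSubalgebra k Q := by
  refine ⟨FreeAlgebra.lift k fun b => i (![1, a] b) * X,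
    FreeAlgebra.lift_injective_of_linearIndependent _ ?_⟩
  convert (linearIndependent_mul_pow hX (linearIndepOn_wordCoeff τ a hnew)).comp
    FreeMonoid.toList FreeMonoid.toList.injective with w
  rw [FreeMonoid.lift_apply, List.prod_map_mul_eq_wordCoeff i τ X hXi]
  rfl

end

theorem containsFreeSubalgebra_of_infinitely_generated_general
    (k : Type*) [Field k] (K : Type*) [Field K] [Algebra k K]
    (σ : K ≃ₐ[k] K)
    (a : K)
    (hgen : IntermediateField.adjoin k (Set.range fun n : ℤ => (σ ^ n) a) = ⊤)
    (hnfg : ¬ (⊤ : IntermediateField k K).FG)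
    (Q : Type*) [DivisionRing Q] [Algebra k Q] (i : K →ₐ[k] Q) (x : Q)
    (hQ : IsOreQuotient k K σ.toAlgHom 0 Q i x) :
    ContainsFreeSubalgebra k Q := by
  have hxi (b : K) : x * i b = i (σ b) * x := by simpa using hQ.rel b
  have hxi_inv (b : K) : x⁻¹ * i b = i (σ⁻¹ b) * x⁻¹ := by
    simpa [SemiconjBy] using SemiconjBy.inv_symm_left₀ (hxi (σ⁻¹ b))
  rcases forall_inv_apply_notMem_orbitField_or σ a hgen hnfg with hnew | hnew
  · exact containsFreeSubalgebra_of_forall_inv_apply_notMem_orbitField σ a hnew i x hxi hQ.indep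
  · exact containsFreeSubalgebra_of_forall_inv_apply_notMem_orbitField σ⁻¹ a hnew i x⁻¹ hxi_inv
      (PowersLeftIndependent.inv hQ.indep)

/-- Proposition 3.2 of the paper.  Let `K` be a field with automorphism `σ`
whose fixed field is `k`, and suppose there is `a ∈ K` on an infinite `σ`-orbit with
`K = k(σⁿ(a) : n ∈ ℤ)`.  If `K` is not finitely generated as a field extension of `k`, then
the quotient division ring `Q = K(x; σ)` contains a free `k`-subalgebra on two generators. -/
theorem containsFreeSubalgebra_of_infinitely_generated
    (k : Type*) [Field k] (K : Type*) [Field K] [Algebra k K]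
    (σ : K ≃ₐ[k] K)
    (hfix : ∀ b : K, σ b = b ↔ ∃ c : k, algebraMap k K c = b)
    (a : K)
    (horbit : (Set.range fun n : ℤ => (σ ^ n) a).Infinite)
    (hgen : IntermediateField.adjoin k (Set.range fun n : ℤ => (σ ^ n) a) = ⊤)
    (hnfg : ¬ (⊤ : IntermediateField k K).FG)
    (Q : Type*) [DivisionRing Q] [Algebra k Q] (i : K →ₐ[k] Q) (x : Q)
    (hQ : IsOreQuotient k K σ.toAlgHom 0 Q i x) :
    ContainsFreeSubalgebra k Q :=
  containsFreeSubalgebra_of_infinitely_generated_general k K σ a hgen hnfg Q i x hQ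
end

section
/- Let K be a field with automorphism σ whose fixed field is k, let a ∈ K, and write a_j = σ^j(a) for j ∈ ℤ. If the field k(a_i : i ≥ 0) is not finitely generated as a field extension of k, then the countable family of elements {a x^j : j ≥ 1} generates a free k-subalgebra of the quotient division ring K(x;σ): all distinct words in these elements are linearly independent over k. -/
open scoped BigOperators

/-!
Write `aₙ = σⁿ(a)`. Pushing the powers of `x` to the right, a word in the generators `a x^(j+1)`
becomes `b x^d`, where `b` is a squarefree monomial in the `aₙ`; the word is determined by `d`
together with the set of indices occurring in `b`. Powers of `x` are left independent over `K`,
so a `k`-linear relation among words splits into relations among squarefree monomials of a fixed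
degree. These monomials are linearly independent over `k` because no `a_M` lies in
`k(a₀, …, a_{M-1})`: otherwise, applying powers of `σ`, which fix `k`, every `aₙ` would lie in
this finitely generated field.
-/

open Finset IntermediateField

namespace FreeAlgebra

theorem lift_basisFreeMonoid {k X A : Type*} [CommSemiring k] [Semiring A] [Algebra k A]
    (g : X → A) (w : FreeMonoid X) :
    lift k g (basisFreeMonoid k X w) = FreeMonoid.lift g w := by
  simpa [basisFreeMonoid, equivMonoidAlgebraFreeMonoid] using
    DFunLike.congr_fun (FreeMonoid.comp_lift (lift k g : FreeAlgebra k X →* A) (ι k)) w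

theorem lift_injective_of_linearIndependent_s9 {k X A : Type*} [CommSemiring k] [Semiring A]
    [Algebra k A] {g : X → A} (hg : LinearIndependent k fun w => FreeMonoid.lift g w) :
    Function.Injective (lift k g) := by
  have h : (lift k g).toLinearMap = (basisFreeMonoid k X).constr k fun w => FreeMonoid.lift g w :=
    (basisFreeMonoid k X).ext fun w => by simp [lift_basisFreeMonoid]
  exact congrArg DFunLike.coe h ▸ (basisFreeMonoid k X).injective_constr_of_linearIndependent hg

end FreeAlgebra

/- A word `[j₁, …, jᵣ]` stands for the product `(a x^(j₁+1)) ⋯ (a x^(jᵣ+1))`. Moving all powers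
of `x` to the right turns it into `a σ^(s₁)(a) ⋯ σ^(sᵣ₋₁)(a) x^(sᵣ)`, where
`sₘ = (j₁+1) + ⋯ + (jₘ+1)`: the exponent is `wordDegree` and `{0, s₁, …, sᵣ₋₁}` is `wordShifts`. -/
def wordDegree : List ℕ → ℕ
  | [] => 0
  | j :: u => j + 1 + wordDegree u

def wordShifts : List ℕ → Finset ℕ
  | [] => ∅
  | j :: u => insert 0 ((wordShifts u).map (addRightEmbedding (j + 1)))

theorem zero_notMem_map_addRightEmbedding (s : Finset ℕ) (j : ℕ) :
    0 ∉ s.map (addRightEmbedding (j + 1)) := by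
  simp

theorem not_lt_of_wordShifts_cons_eq {j j' : ℕ} {u u' : List ℕ}
    (hD : wordDegree (j :: u) = wordDegree (j' :: u'))
    (hT : wordShifts (j :: u) = wordShifts (j' :: u')) : ¬j < j' := by
  intro hlt
  cases u with
  | nil => simp only [wordDegree] at hD; omega
  | cons j₂ u₂ =>
    have hmem : j + 1 ∈ wordShifts (j' :: u') :=
      hT ▸ by simp [wordShifts]
    simp only [wordShifts, mem_insert, mem_map, addRightEmbedding_apply] at hmem
    omega

theorem eq_of_wordDegree_eq_of_wordShifts_eq {w w' : List ℕ} (hD : wordDegree w = wordDegree w')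
    (hT : wordShifts w = wordShifts w') : w = w' := by
  induction w generalizing w' with
  | nil => cases w' with
    | nil => rfl
    | cons => simp [wordDegree] at hD; omega
  | cons j u ih =>
    cases w' with
    | nil => simp [wordDegree] at hD
    | cons j' u' =>
      obtain rfl : j = j' := by
        have := not_lt_of_wordShifts_cons_eq hD hT
        have := not_lt_of_wordShifts_cons_eq hD.symm hT.symm
        omega
      have hT' : wordShifts u = wordShifts u' := by
        simpa [wordShifts, erase_insert (zero_notMem_map_addRightEmbedding _ _)] using
          congrArg (·.erase 0) hT
      rw [ih (by simpa [wordDegree] using hD) hT']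

theorem prod_wordShifts_cons {K : Type*} [CommMonoid K] (f : ℕ → K) (j : ℕ) (u : List ℕ) :
    ∏ s ∈ wordShifts (j :: u), f s = f 0 * ∏ s ∈ wordShifts u, f (s + (j + 1)) := by
  rw [wordShifts, prod_insert (zero_notMem_map_addRightEmbedding _ _), prod_map]
  rfl

namespace IsOreQuotient

variable {k : Type*} [CommRing k] {A : Type*} [Ring A] [Algebra k A] {Q : Type*} [DivisionRing Q]
  [Algebra k Q] {i : A →ₐ[k] Q} {x : Q}

theorem pow_mul_eq {σ : A ≃ₐ[k] A} (hQ : IsOreQuotient k A σ.toAlgHom 0 Q i x) (e : ℕ) (b : A) :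
    x ^ e * i b = i ((σ ^ e) b) * x ^ e := by
  induction e generalizing b with
  | zero => simp
  | succ e ih =>
    have hrel : x * i ((σ ^ e) b) = i ((σ ^ (e + 1)) b) * x := by
      simpa [pow_succ'] using hQ.rel ((σ ^ e) b)
    rw [pow_succ', mul_assoc, ih, ← mul_assoc, hrel, mul_assoc]

theorem injective_lsum_mul_pow {σ : A →ₐ[k] A} {δ : A →ₗ[k] A}
    (hQ : IsOreQuotient k A σ δ Q i x) :
    Function.Injective (Finsupp.lsum k fun n => LinearMap.mulRight k (x ^ n) ∘ₗ i.toLinearMap) := by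
  rw [← LinearMap.ker_eq_bot, LinearMap.ker_eq_bot']
  intro c hc
  obtain ⟨N, hN⟩ := exists_nat_subset_range c.support
  have hsum : ∑ n ∈ range N, i (c n) * x ^ n = 0 := by
    rw [← hc, Finsupp.lsum_apply, Finsupp.sum_of_support_subset c hN _ (by simp)]
    rfl
  ext n
  by_cases hn : n < N
  · exact hQ.indep N c hsum n hn
  · exact Finsupp.notMem_support_iff.1 fun h => hn (mem_range.1 (hN h))

theorem linearIndependent_mul_pow {σ : A →ₐ[k] A} {δ : A →ₗ[k] A}
    (hQ : IsOreQuotient k A σ δ Q i x) {ι : Type*} (v : ι → A) (d : ι → ℕ)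
    (hv : ∀ n, LinearIndependent k fun w : {w // d w = n} => v w) :
    LinearIndependent k fun w => i (v w) * x ^ d w := by
  have h := ((Finsupp.linearIndependent_single (R := k) _ hv).map' _
    (LinearMap.ker_eq_bot.2 hQ.injective_lsum_mul_pow)).comp _
    (Equiv.sigmaFiberEquiv d).symm.injective
  simpa [Function.comp_def, Equiv.sigmaFiberEquiv] using h

end IsOreQuotient

theorem IsOreQuotient.freeMonoidLift_eq {k : Type*} [CommRing k] {A : Type*} [CommRing A]
    [Algebra k A] {σ : A ≃ₐ[k] A} {Q : Type*} [DivisionRing Q] [Algebra k Q] {i : A →ₐ[k] Q} {x : Q}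
    (hQ : IsOreQuotient k A σ.toAlgHom 0 Q i x) (a : A) (w : FreeMonoid ℕ) :
    FreeMonoid.lift (fun j : ℕ => i a * x ^ (j + 1)) w =
      i (∏ s ∈ wordShifts w.toList, (σ ^ s) a) * x ^ wordDegree w.toList := by
  induction w using FreeMonoid.inductionOn' with
  | one => simp [wordShifts, wordDegree]
  | of_mul j w ih =>
    set P := ∏ s ∈ wordShifts w.toList, (σ ^ s) a
    have hshift : (σ ^ (j + 1)) P = ∏ s ∈ wordShifts w.toList, (σ ^ (s + (j + 1))) a := by
      rw [map_prod]
      exact prod_congr rfl fun s _ => by rw [← AlgEquiv.mul_apply, ← pow_add, add_comm]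
    rw [map_mul, FreeMonoid.lift_eval_of, ih, FreeMonoid.toList_of_mul, prod_wordShifts_cons,
      wordDegree, ← hshift, pow_zero, AlgEquiv.one_apply, map_mul, pow_add x (j + 1)]
    calc i a * x ^ (j + 1) * (i P * x ^ wordDegree w.toList)
        = i a * (x ^ (j + 1) * i P) * x ^ wordDegree w.toList := by simp only [mul_assoc]
      _ = _ := by rw [hQ.pow_mul_eq]; simp only [mul_assoc]

section Monomials

variable {k : Type*} [Field k] {K : Type*} [Field K] [Algebra k K]

theorem linearIndepOn_prod_powerset_range (A : ℕ → K)
    (hA : ∀ M, A M ∉ adjoin k (A '' Set.Iio M)) (M : ℕ) :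
    LinearIndepOn k (fun S : Finset ℕ => ∏ s ∈ S, A s) ((range M).powerset : Set (Finset ℕ)) := by
  classical
  induction M with
  | zero => simp
  | succ M ih =>
    rw [linearIndepOn_finset_iff] at ih ⊢
    intro f hf
    have hmem (g : Finset ℕ → k) :
        ∑ S ∈ (range M).powerset, g S • ∏ s ∈ S, A s ∈ adjoin k (A '' Set.Iio M) :=
      sum_mem fun S hS => smul_mem _ <| prod_mem fun s hs =>
        subset_adjoin _ _ (Set.mem_image_of_mem A (by simpa using mem_powerset.1 hS hs))
    set r := ∑ S ∈ (range M).powerset, f S • ∏ s ∈ S, A s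
    set q := ∑ S ∈ (range M).powerset, f (insert M S) • ∏ s ∈ S, A s
    have hrq : r + A M * q = 0 := by
      rw [← hf, range_add_one, sum_powerset_insert notMem_range_self, mul_sum]
      congr 1
      refine sum_congr rfl fun S hS => ?_
      rw [prod_insert fun h => by simpa using mem_powerset.1 hS h, mul_smul_comm]
    have hq : q = 0 := by
      by_contra hq
      refine hA M ?_
      rw [show A M = -r / q by field_simp; linear_combination hrq]
      exact div_mem (neg_mem (hmem f)) (hmem _)
    have hr : r = 0 := by simpa [hq] using hrq
    intro S hS
    rw [range_add_one, powerset_insert, mem_union, mem_image] at hS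
    rcases hS with hS | ⟨T, hT, rfl⟩
    · exact ih f hr S hS
    · exact ih (fun T => f (insert M T)) hq T hT

theorem linearIndependent_prod_of_forall_notMem_adjoin (A : ℕ → K)
    (hA : ∀ M, A M ∉ adjoin k (A '' Set.Iio M)) :
    LinearIndependent k fun S : Finset ℕ => ∏ s ∈ S, A s := by
  have hcover : ⋃ M, ((range M).powerset : Set (Finset ℕ)) = Set.univ :=
    Set.eq_univ_of_forall fun S => Set.mem_iUnion.2 <|
      (exists_nat_subset_range S).imp fun _ hM => mem_powerset.2 hM
  rw [← linearIndepOn_univ_iff, ← hcover]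
  exact linearIndepOn_iUnion_of_directed
    (Monotone.directed_le fun _ _ h => coe_subset.2 (powerset_mono.2 (range_mono h)))
    (linearIndepOn_prod_powerset_range A hA)

theorem adjoin_range_pow_apply_eq_of_mem (σ : K ≃ₐ[k] K) (a : K) {M : ℕ}
    (hM : (σ ^ M) a ∈ adjoin k ((fun n => (σ ^ n) a) '' Set.Iio M)) :
    adjoin k (Set.range fun n : ℕ => (σ ^ n) a) = adjoin k ((fun n => (σ ^ n) a) '' Set.Iio M) := by
  set E := adjoin k ((fun n => (σ ^ n) a) '' Set.Iio M)
  have hpow (t n : ℕ) : (σ ^ t) ((σ ^ n) a) = (σ ^ (t + n)) a := by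
    rw [pow_add, AlgEquiv.mul_apply]
  have hall (j : ℕ) : (σ ^ j) a ∈ E := by
    induction j using Nat.strong_induction_on with
    | _ j ih =>
      by_cases hj : j < M
      · exact subset_adjoin _ _ ⟨j, hj, rfl⟩
      obtain ⟨t, rfl⟩ : ∃ t, j = t + M := ⟨j - M, by omega⟩
      have hmap : E.map (σ ^ t : K ≃ₐ[k] K).toAlgHom ≤ E := by
        rw [adjoin_map, adjoin_le_iff]
        rintro _ ⟨_, ⟨n, hn, rfl⟩, rfl⟩
        show (σ ^ t) ((σ ^ n) a) ∈ E
        rw [hpow]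
        exact ih (t + n) (by simp only [Set.mem_Iio] at hn; omega)
      exact hmap ⟨_, hM, hpow t M⟩
  exact le_antisymm (adjoin_le_iff.2 (Set.range_subset_iff.2 hall))
    (adjoin.mono _ _ _ (Set.image_subset_range _ _))

theorem pow_apply_notMem_adjoin_of_not_fg (σ : K ≃ₐ[k] K) (a : K)
    (h : ¬(adjoin k (Set.range fun n : ℕ => (σ ^ n) a)).FG) (M : ℕ) :
    (σ ^ M) a ∉ adjoin k ((fun n => (σ ^ n) a) '' Set.Iio M) := fun hM =>
  h (adjoin_range_pow_apply_eq_of_mem σ a hM ▸ fg_adjoin_of_finite ((Set.finite_Iio M).image _))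

end Monomials

theorem free_subalgebra_on_countably_many_generators_general
    (k : Type*) [Field k] (K : Type*) [Field K] [Algebra k K]
    (σ : K ≃ₐ[k] K)
    (a : K)
    (hnfg : ¬ (IntermediateField.adjoin k (Set.range fun n : ℕ => (σ ^ n) a)).FG)
    (Q : Type*) [DivisionRing Q] [Algebra k Q] (i : K →ₐ[k] Q) (x : Q)
    (hQ : IsOreQuotient k K σ.toAlgHom 0 Q i x) :
    Function.Injective ⇑(FreeAlgebra.lift k fun j : ℕ => i a * x ^ (j + 1)) := by
  have hmonomials : LinearIndependent k fun S : Finset ℕ => ∏ s ∈ S, (σ ^ s) a :=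
    linearIndependent_prod_of_forall_notMem_adjoin _ (pow_apply_notMem_adjoin_of_not_fg σ a hnfg)
  have hfibers (n : ℕ) :
      LinearIndependent k fun w : {w : FreeMonoid ℕ // wordDegree w.toList = n} =>
        ∏ s ∈ wordShifts w.1.toList, (σ ^ s) a := by
    refine hmonomials.comp _ ?_
    rintro ⟨w, hw⟩ ⟨w', hw'⟩ hT
    exact Subtype.ext <| FreeMonoid.toList.injective <|
      eq_of_wordDegree_eq_of_wordShifts_eq (hw.trans hw'.symm) hT
  refine FreeAlgebra.lift_injective_of_linearIndependent_s9 ?_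
  simpa only [hQ.freeMonoidLift_eq] using hQ.linearIndependent_mul_pow _ _ hfibers

/-- Let `K` be a field with automorphism `σ` whose fixed field is `k`, let
`a ∈ K` and write `a_j = σ^j(a)`.  If the field `k(a_i : i ≥ 0)` is not finitely generated as
a field extension of `k`, then in the quotient division ring `Q = K(x; σ)` the countable
family `{a x^j : j ≥ 1}` generates a free `k`-subalgebra: all distinct words in these elements
are linearly independent over `k` (i.e. the algebra map from the free `k`-algebra on countably
many generators sending the `j`-th generator to `a x^(j+1)` is injective). -/
theorem free_subalgebra_on_countably_many_generators
    (k : Type*) [Field k] (K : Type*) [Field K] [Algebra k K]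
    (σ : K ≃ₐ[k] K)
    (hfix : ∀ b : K, σ b = b ↔ ∃ c : k, algebraMap k K c = b)
    (a : K)
    (hnfg : ¬ (IntermediateField.adjoin k (Set.range fun n : ℕ => (σ ^ n) a)).FG)
    (Q : Type*) [DivisionRing Q] [Algebra k Q] (i : K →ₐ[k] Q) (x : Q)
    (hQ : IsOreQuotient k K σ.toAlgHom 0 Q i x) :
    Function.Injective ⇑(FreeAlgebra.lift k fun j : ℕ => i a * x ^ (j + 1)) :=
  free_subalgebra_on_countably_many_generators_general k K σ a hnfg Q i x hQ
end
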